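/- Let v₁ = (p₁,q₁), v₂ = (p₂,q₂) ∈ ℕ² be linearly independent, and let a, b, ν ∈ ℕ with ν ≥ 1. Set N₁ = p₁a + q₁b and N₂ = p₂a + q₂b, and suppose N₁ ≥ 1 and N₂ ≥ 1. Then in ℚ[[u,T]], ∑_{(k₁,k₂) ∈ int(Δ) ∩ ℤ²} u^{ν k₁ + k₂} T^{k₁ a + k₂ b} = D_Δ / ((1 - u^{p₁ν+q₁} T^{N₁})(1 - u^{p₂ν+q₂} T^{N₂})), where Δ is the cone generated by v₁, v₂, D_Δ = ∑_{(i,j) ∈ P_Δ} u^{νi+j} T^{ia+jb}, and P_Δ is the fundamental domain {μ₁v₁ + μ₂v₂ : 0 < μ₁ ≤ 1, 0 < μ₂ ≤ 1, μᵢ ∈ ℚ} ∩ ℤ². -/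

import Mathlib

open MvPowerSeries Finsupp

/-!
In coordinates `(μ₁, μ₂)` with respect to `v₁, v₂`, the interior lattice points with `μ₁ > 1`
(resp. `μ₂ > 1`) are exactly the translates by `v₁` (resp. `v₂`) of interior lattice points, those
with both `μᵢ > 1` are the translates by `v₁ + v₂`, and the remaining ones form `P_Δ`. Translating
by `v` multiplies the generating series by the monomial of `v`, so inclusion–exclusion gives
`F = D + X^{v₁} F + X^{v₂} F - X^{v₁ + v₂} F`.
-/

section CountingSeries

variable {M σ : Type*}

noncomputable def countingSeries (w : M → σ →₀ ℕ) (S : Set M) : MvPowerSeries σ ℚ :=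
  fun e => (S ∩ w ⁻¹' {e}).ncard

theorem coeff_countingSeries (w : M → σ →₀ ℕ) (S : Set M) (e : σ →₀ ℕ) :
    coeff e (countingSeries w S) = (S ∩ w ⁻¹' {e}).ncard :=
  rfl

@[simp]
theorem countingSeries_empty (w : M → σ →₀ ℕ) : countingSeries w ∅ = 0 := by
  ext e
  simp [coeff_countingSeries]

theorem countingSeries_union_add_inter {w : M → σ →₀ ℕ} (hw : ∀ e, (w ⁻¹' {e}).Finite)
    (S T : Set M) :
    countingSeries w (S ∪ T) + countingSeries w (S ∩ T) =
      countingSeries w S + countingSeries w T := by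
  ext e
  simp only [map_add, coeff_countingSeries]
  rw [Set.union_inter_distrib_right, Set.inter_inter_distrib_right]
  exact_mod_cast Set.ncard_union_add_ncard_inter _ _
    ((hw e).subset Set.inter_subset_right) ((hw e).subset Set.inter_subset_right)

theorem countingSeries_image_add [AddCancelCommMonoid M] (w : M →+ σ →₀ ℕ) (v : M) (S : Set M) :
    countingSeries w ((v + ·) '' S) = monomial (w v) 1 * countingSeries w S := by
  ext e
  rw [coeff_monomial_mul, one_mul, coeff_countingSeries]
  split_ifs with hv
  · have hfiber : (v + ·) '' S ∩ w ⁻¹' {e} = (v + ·) '' (S ∩ w ⁻¹' {e - w v}) := by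
      ext k
      simp only [Set.mem_inter_iff, Set.mem_image, Set.mem_preimage, Set.mem_singleton_iff]
      constructor
      · rintro ⟨⟨k', hk', rfl⟩, hk⟩
        exact ⟨k', ⟨hk', by rw [eq_tsub_iff_add_eq_of_le hv, add_comm, ← map_add, hk]⟩, rfl⟩
      · rintro ⟨k', ⟨hk', hk⟩, rfl⟩
        exact ⟨⟨k', hk', rfl⟩, by rw [map_add, hk, add_tsub_cancel_of_le hv]⟩
    rw [hfiber, Set.ncard_image_of_injective _ (add_right_injective v), coeff_countingSeries]
  · have hfiber : (v + ·) '' S ∩ w ⁻¹' {e} = ∅ := by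
      refine Set.eq_empty_of_forall_notMem ?_
      rintro _ ⟨⟨k', -, rfl⟩, hk⟩
      exact hv (by rw [← Set.mem_singleton_iff.mp hk, map_add]; exact le_self_add)
    rw [hfiber, Set.ncard_empty, Nat.cast_zero]

end CountingSeries

/-- Cramer's rule; junk (`0`) when `v₁, v₂` are linearly dependent. -/
noncomputable def coneCoords (v₁ v₂ : ℕ × ℕ) : ℕ × ℕ →+ ℚ × ℚ :=
  AddMonoidHom.mk'
    (fun k => (((v₂.2 : ℚ) * k.1 - v₂.1 * k.2) / (v₁.1 * v₂.2 - v₂.1 * v₁.2),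
      ((v₁.1 : ℚ) * k.2 - v₁.2 * k.1) / (v₁.1 * v₂.2 - v₂.1 * v₁.2)))
    (fun k k' => by ext <;> simp only [Prod.fst_add, Prod.snd_add, Nat.cast_add] <;> ring)

def coneInterior (v₁ v₂ : ℕ × ℕ) : Set (ℕ × ℕ) :=
  coneCoords v₁ v₂ ⁻¹' (Set.Ioi 0 ×ˢ Set.Ioi 0)

def fundamentalDomain (v₁ v₂ : ℕ × ℕ) : Set (ℕ × ℕ) :=
  coneCoords v₁ v₂ ⁻¹' (Set.Ioc 0 1 ×ˢ Set.Ioc 0 1)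

section Cone

variable {v₁ v₂ : ℕ × ℕ}

theorem coneCoords_eq_iff (h : v₁.1 * v₂.2 ≠ v₂.1 * v₁.2) {k : ℕ × ℕ} {μ : ℚ × ℚ} :
    coneCoords v₁ v₂ k = μ ↔
      (k.1 : ℚ) = μ.1 * v₁.1 + μ.2 * v₂.1 ∧ (k.2 : ℚ) = μ.1 * v₁.2 + μ.2 * v₂.2 := by
  have hdet : (v₁.1 * v₂.2 - v₂.1 * v₁.2 : ℚ) ≠ 0 := sub_ne_zero.mpr (by exact_mod_cast h)
  simp only [coneCoords, AddMonoidHom.mk'_apply, Prod.ext_iff, div_eq_iff hdet]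
  constructor
  · rintro ⟨h₁, h₂⟩
    constructor
    · apply mul_left_cancel₀ hdet
      linear_combination (v₁.1 : ℚ) * h₁ + v₂.1 * h₂
    · apply mul_left_cancel₀ hdet
      linear_combination (v₁.2 : ℚ) * h₁ + v₂.2 * h₂
  · rintro ⟨h₁, h₂⟩
    constructor
    · linear_combination (v₂.2 : ℚ) * h₁ - v₂.1 * h₂
    · linear_combination (v₁.1 : ℚ) * h₂ - v₁.2 * h₁

theorem coneCoords_left (h : v₁.1 * v₂.2 ≠ v₂.1 * v₁.2) : coneCoords v₁ v₂ v₁ = (1, 0) :=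
  (coneCoords_eq_iff h).mpr (by simp)

theorem coneCoords_right (h : v₁.1 * v₂.2 ≠ v₂.1 * v₁.2) : coneCoords v₁ v₂ v₂ = (0, 1) :=
  (coneCoords_eq_iff h).mpr (by simp)

theorem mem_preimage_coneCoords (h : v₁.1 * v₂.2 ≠ v₂.1 * v₁.2) {s : Set (ℚ × ℚ)}
    {k : ℕ × ℕ} :
    k ∈ coneCoords v₁ v₂ ⁻¹' s ↔ ∃ μ₁ μ₂ : ℚ, (μ₁, μ₂) ∈ s ∧
      (k.1 : ℚ) = μ₁ * v₁.1 + μ₂ * v₂.1 ∧ (k.2 : ℚ) = μ₁ * v₁.2 + μ₂ * v₂.2 := by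
  constructor
  · exact fun hk => ⟨_, _, hk, (coneCoords_eq_iff h).mp rfl⟩
  · rintro ⟨μ₁, μ₂, hμ, hk⟩
    rwa [Set.mem_preimage, (coneCoords_eq_iff h (μ := (μ₁, μ₂))).mpr hk]

/-- True because `v₁, v₂` have nonnegative entries. -/
theorem le_of_coneCoords_le (h : v₁.1 * v₂.2 ≠ v₂.1 * v₁.2) {k k' : ℕ × ℕ}
    (h₁ : (coneCoords v₁ v₂ k).1 ≤ (coneCoords v₁ v₂ k').1)
    (h₂ : (coneCoords v₁ v₂ k).2 ≤ (coneCoords v₁ v₂ k').2) : k ≤ k' := by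
  obtain ⟨hk₁, hk₂⟩ := (coneCoords_eq_iff h).mp (rfl : coneCoords v₁ v₂ k = _)
  obtain ⟨hk₁', hk₂'⟩ := (coneCoords_eq_iff h).mp (rfl : coneCoords v₁ v₂ k' = _)
  refine Prod.le_def.mpr ⟨?_, ?_⟩ <;> rw [← Nat.cast_le (α := ℚ)]
  · rw [hk₁, hk₁']
    gcongr
  · rw [hk₂, hk₂']
    gcongr

theorem image_add_coneInterior (h : v₁.1 * v₂.2 ≠ v₂.1 * v₁.2) (v : ℕ × ℕ) :
    (v + ·) '' coneInterior v₁ v₂ =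
      coneCoords v₁ v₂ ⁻¹' (Set.Ioi (coneCoords v₁ v₂ v).1 ×ˢ Set.Ioi (coneCoords v₁ v₂ v).2) := by
  ext k
  simp only [coneInterior, Set.mem_image, Set.mem_preimage, Set.mem_prod, Set.mem_Ioi]
  constructor
  · rintro ⟨k', hk', rfl⟩
    simp only [map_add, Prod.fst_add, Prod.snd_add]
    constructor <;> linarith [hk'.1, hk'.2]
  · rintro ⟨h₁, h₂⟩
    obtain ⟨k', rfl⟩ := exists_add_of_le (le_of_coneCoords_le h h₁.le h₂.le)
    simp only [map_add, Prod.fst_add, Prod.snd_add] at h₁ h₂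
    exact ⟨k', ⟨by linarith, by linarith⟩, rfl⟩

theorem coneInterior_eq_union (h : v₁.1 * v₂.2 ≠ v₂.1 * v₁.2) :
    coneInterior v₁ v₂ = fundamentalDomain v₁ v₂ ∪
      ((v₁ + ·) '' coneInterior v₁ v₂ ∪ (v₂ + ·) '' coneInterior v₁ v₂) := by
  rw [image_add_coneInterior h, image_add_coneInterior h, coneCoords_left h, coneCoords_right h,
    coneInterior, fundamentalDomain, ← Set.preimage_union, ← Set.preimage_union]
  congr 1
  ext ⟨x, y⟩
  simp only [Set.mem_union, Set.mem_prod, Set.mem_Ioi, Set.mem_Ioc]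
  constructor
  · rintro ⟨hx, hy⟩
    rcases le_or_gt x 1 with hx' | hx' <;> rcases le_or_gt y 1 with hy' | hy' <;> simp_all
  · rintro (⟨⟨hx, -⟩, hy, -⟩ | ⟨hx, hy⟩ | ⟨hx, hy⟩) <;> constructor <;> linarith

theorem disjoint_fundamentalDomain_image_add (h : v₁.1 * v₂.2 ≠ v₂.1 * v₁.2) :
    Disjoint (fundamentalDomain v₁ v₂)
      ((v₁ + ·) '' coneInterior v₁ v₂ ∪ (v₂ + ·) '' coneInterior v₁ v₂) := by
  rw [image_add_coneInterior h, image_add_coneInterior h, coneCoords_left h, coneCoords_right h,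
    fundamentalDomain, ← Set.preimage_union]
  refine Disjoint.preimage _ (Set.disjoint_left.mpr ?_)
  rintro ⟨x, y⟩ ⟨⟨-, hx⟩, -, hy⟩ (⟨hx', -⟩ | ⟨-, hy'⟩)
  · exact (not_lt.mpr hx) hx'
  · exact (not_lt.mpr hy) hy'

theorem image_add_coneInterior_inter (h : v₁.1 * v₂.2 ≠ v₂.1 * v₁.2) :
    (v₁ + ·) '' coneInterior v₁ v₂ ∩ (v₂ + ·) '' coneInterior v₁ v₂ =
      (v₁ + v₂ + ·) '' coneInterior v₁ v₂ := by
  rw [image_add_coneInterior h, image_add_coneInterior h, image_add_coneInterior h, map_add,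
    coneCoords_left h, coneCoords_right h, ← Set.preimage_inter, Set.prod_inter_prod,
    Set.Ioi_inter_Ioi, Set.Ioi_inter_Ioi]
  norm_num

theorem countingSeries_coneInterior (h : v₁.1 * v₂.2 ≠ v₂.1 * v₁.2) {σ : Type*}
    {w : ℕ × ℕ →+ σ →₀ ℕ} (hw : ∀ e, (w ⁻¹' {e}).Finite) :
    (1 - monomial (w v₁) 1) * (1 - monomial (w v₂) 1) * countingSeries w (coneInterior v₁ v₂) =
      countingSeries w (fundamentalDomain v₁ v₂) := by
  have hsplit := countingSeries_union_add_inter hw (fundamentalDomain v₁ v₂)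
    ((v₁ + ·) '' coneInterior v₁ v₂ ∪ (v₂ + ·) '' coneInterior v₁ v₂)
  have hshifts := countingSeries_union_add_inter hw
    ((v₁ + ·) '' coneInterior v₁ v₂) ((v₂ + ·) '' coneInterior v₁ v₂)
  rw [← coneInterior_eq_union h, (disjoint_fundamentalDomain_image_add h).inter_eq,
    countingSeries_empty, add_zero] at hsplit
  rw [image_add_coneInterior_inter h, countingSeries_image_add, countingSeries_image_add,
    countingSeries_image_add, map_add] at hshifts
  have hmono := monomial_mul_monomial (w v₁) (w v₂) (1 : ℚ) 1
  rw [one_mul] at hmono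
  linear_combination hsplit + hshifts + countingSeries w (coneInterior v₁ v₂) * hmono

end Cone

/-- The exponent of `u ^ (ν k₁ + k₂) * T ^ (k₁ a + k₂ b)`, with `u` the variable `0` and `T`
the variable `1`. -/
noncomputable def exponent (ν a b : ℕ) : ℕ × ℕ →+ Fin 2 →₀ ℕ where
  toFun k := single 0 (ν * k.1 + k.2) + single 1 (k.1 * a + k.2 * b)
  map_zero' := by simp
  map_add' k k' := by
    simp only [Prod.fst_add, Prod.snd_add]
    rw [add_add_add_comm, ← single_add, ← single_add]
    congr 2 <;> ring

theorem exponent_apply (ν a b : ℕ) (k : ℕ × ℕ) :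
    exponent ν a b k = single 0 (ν * k.1 + k.2) + single 1 (k.1 * a + k.2 * b) :=
  rfl

theorem exponent_eq_iff {ν a b : ℕ} {k : ℕ × ℕ} {e : Fin 2 →₀ ℕ} :
    exponent ν a b k = e ↔ ν * k.1 + k.2 = e 0 ∧ k.1 * a + k.2 * b = e 1 := by
  simp [exponent_apply, Finsupp.ext_iff, Fin.forall_fin_two, eq_comm]

theorem finite_exponent_preimage {ν : ℕ} (hν : 1 ≤ ν) (a b : ℕ) (e : Fin 2 →₀ ℕ) :
    (exponent ν a b ⁻¹' {e}).Finite := by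
  refine (Set.finite_Iic (e 0, e 0)).subset fun k hk => ?_
  obtain ⟨hk, -⟩ := exponent_eq_iff.mp hk
  exact Prod.le_def.mpr ⟨by nlinarith, by omega⟩

theorem stmt_6 (p₁ q₁ p₂ q₂ a b ν : ℕ) (hν : 1 ≤ ν)
    (hindep : p₁ * q₂ ≠ p₂ * q₁)
    (F D : MvPowerSeries (Fin 2) ℚ)
    (hF : ∀ e : Fin 2 →₀ ℕ, MvPowerSeries.coeff e F =
      ({k : ℕ × ℕ | (∃ μ₁ μ₂ : ℚ, 0 < μ₁ ∧ 0 < μ₂ ∧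
          (k.1 : ℚ) = μ₁ * p₁ + μ₂ * p₂ ∧ (k.2 : ℚ) = μ₁ * q₁ + μ₂ * q₂) ∧
        ν * k.1 + k.2 = e 0 ∧ k.1 * a + k.2 * b = e 1} : Set (ℕ × ℕ)).ncard)
    (hD : ∀ e : Fin 2 →₀ ℕ, MvPowerSeries.coeff e D =
      ({k : ℕ × ℕ | (∃ μ₁ μ₂ : ℚ, 0 < μ₁ ∧ μ₁ ≤ 1 ∧ 0 < μ₂ ∧ μ₂ ≤ 1 ∧
          (k.1 : ℚ) = μ₁ * p₁ + μ₂ * p₂ ∧ (k.2 : ℚ) = μ₁ * q₁ + μ₂ * q₂) ∧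
        ν * k.1 + k.2 = e 0 ∧ k.1 * a + k.2 * b = e 1} : Set (ℕ × ℕ)).ncard) :
    (1 - MvPowerSeries.monomial (single (0 : Fin 2) (p₁ * ν + q₁) + single 1 (p₁ * a + q₁ * b)) 1) *
      (1 - MvPowerSeries.monomial (single (0 : Fin 2) (p₂ * ν + q₂) + single 1 (p₂ * a + q₂ * b)) 1) *
      F = D := by
  have hdet : (p₁, q₁).1 * (p₂, q₂).2 ≠ (p₂, q₂).1 * (p₁, q₁).2 := hindep
  have hF' : F = countingSeries (exponent ν a b) (coneInterior (p₁, q₁) (p₂, q₂)) := by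
    ext e
    rw [hF e, coeff_countingSeries]
    congr 2
    ext k
    simp only [coneInterior, Set.mem_inter_iff, mem_preimage_coneCoords hdet, Set.mem_prod,
      Set.mem_Ioi, Set.mem_preimage, Set.mem_singleton_iff, exponent_eq_iff, Set.mem_ofPred_eq,
      and_assoc]
  have hD' : D = countingSeries (exponent ν a b) (fundamentalDomain (p₁, q₁) (p₂, q₂)) := by
    ext e
    rw [hD e, coeff_countingSeries]
    congr 2
    ext k
    simp only [fundamentalDomain, Set.mem_inter_iff, mem_preimage_coneCoords hdet,
      Set.mem_prod, Set.mem_Ioc, Set.mem_preimage, Set.mem_singleton_iff, exponent_eq_iff,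
      Set.mem_ofPred_eq, and_assoc]
  have hexp : ∀ p q : ℕ, single (0 : Fin 2) (p * ν + q) + single 1 (p * a + q * b) =
      exponent ν a b (p, q) := fun p q => by rw [exponent_apply, mul_comm p]
  rw [hF', hD', hexp, hexp]
  exact countingSeries_coneInterior hdet (finite_exponent_preimage hν a b)
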